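/- For Re(ν) > 0 and y > 0, ∫_{−∞}^{∞} (y/(x² + y²))^{1/2 + ν} e^{−2πix} dx = 2 π^{ν + 1/2} √y K_ν(2πy) / Γ(ν + 1/2), where K_ν is the modified Bessel function of the second kind. -/

import Mathlib

open MeasureTheory Real

/-- The modified Bessel function of the second kind,
`K_ν(z) = ∫_0^∞ e^{−z cosh t} cosh(νt) dt`. -/
noncomputable def besselK (ν : ℂ) (z : ℝ) : ℂ :=
  ∫ t in Set.Ioi (0 : ℝ), Complex.exp (-(z : ℂ) * Real.cosh t) * Complex.cosh (ν * t)

open Set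
open scoped Complex

/-!
Writing `(x² + y²)^{-s} = Γ(s)⁻¹ ∫_0^∞ t^{s-1} e^{-t(x²+y²)} dt` with `s = 1/2 + ν` and swapping
the integrals (absolutely convergent since `Re s > 1/2`), the `x`-integral becomes the Fourier
transform of a Gaussian, `√(π/t) e^{-π²/t}`. What is left is the Mellin transform at `ν` of
`e^{-y²t - π²/t}`, which the substitution `t = (π/y) eᵘ` turns into
`∫_ℝ e^{νu - 2πy cosh u} du = 2 K_ν(2πy)`.
-/

theorem Real.one_add_sq_div_two_le_cosh (x : ℝ) : 1 + x ^ 2 / 2 ≤ cosh x := by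
  have hsinh : |x / 2| ≤ |sinh (x / 2)| := by
    rw [abs_sinh]; exact self_le_sinh_iff.2 (abs_nonneg _)
  have hsq : (x / 2) ^ 2 ≤ sinh (x / 2) ^ 2 := sq_le_sq.2 hsinh
  have hcosh : cosh x = 1 + 2 * sinh (x / 2) ^ 2 := by
    rw [← mul_div_cancel₀ x (two_ne_zero' ℝ), cosh_two_mul, cosh_sq]; ring_nf
  nlinarith

theorem integral_eq_integral_Ioi_add_comp_neg {E : Type*} [NormedAddCommGroup E]
    [NormedSpace ℝ E] {f : ℝ → E} (hf : Integrable f) :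
    ∫ x, f x = ∫ x in Ioi 0, (f x + f (-x)) := by
  rw [integral_add hf.integrableOn hf.comp_neg.integrableOn, add_comm,
    ← intervalIntegral.integral_Iic_add_Ioi hf.integrableOn hf.integrableOn,
    ← integral_comp_neg_Ioi 0 f]
  simp

theorem integrable_cexp_mul_sub_mul_cosh (ν : ℂ) {z : ℝ} (hz : 0 < z) :
    Integrable fun u : ℝ => cexp (ν * u - z * cosh u) := by
  have hb : 0 < ((z / 2 : ℝ) : ℂ).re := by simpa using hz
  refine (integrable_cexp_quadratic hb ν 0).norm.mono'
    (by fun_prop) (ae_of_all _ fun u => ?_)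
  simp only [Complex.norm_exp, Real.exp_le_exp]
  have hcosh := Real.one_add_sq_div_two_le_cosh u
  have hre : (ν * ↑u - ↑z * ↑(cosh u)).re = ν.re * u - z * cosh u := by simp
  have hre' : (-((z / 2 : ℝ) : ℂ) * (u : ℂ) ^ 2 + ν * (u : ℂ) + 0).re =
      -(z / 2) * u ^ 2 + ν.re * u := by
    simp [← Complex.ofReal_pow]
  rw [hre, hre']
  nlinarith

theorem integral_cexp_mul_sub_mul_cosh (ν : ℂ) {z : ℝ} (hz : 0 < z) :
    ∫ u : ℝ, cexp (ν * u - z * cosh u) = 2 * besselK ν z := by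
  rw [integral_eq_integral_Ioi_add_comp_neg (integrable_cexp_mul_sub_mul_cosh ν hz), besselK,
    ← integral_const_mul]
  refine setIntegral_congr_fun measurableSet_Ioi fun u _ => ?_
  simp only [Complex.ofReal_neg, Real.cosh_neg, Complex.cosh]
  rw [sub_eq_add_neg, sub_eq_add_neg, Complex.exp_add, Complex.exp_add]
  ring_nf

theorem mellin_eq_integral_cexp_mul_smul_comp_exp {E : Type*} [NormedAddCommGroup E]
    [NormedSpace ℂ E] (f : ℝ → E) (s : ℂ) :
    mellin f s = ∫ u : ℝ, cexp (s * u) • f (rexp u) := by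
  rw [mellin, ← Real.range_exp, ← image_univ, integral_image_eq_integral_abs_deriv_smul
    MeasurableSet.univ (fun u _ => (hasDerivAt_exp u).hasDerivWithinAt) exp_injective.injOn,
    Measure.restrict_univ]
  refine integral_congr_ae (ae_of_all _ fun u => ?_)
  dsimp only
  rw [abs_of_pos (exp_pos u), Complex.cpow_def_of_ne_zero (by exact_mod_cast (exp_pos u).ne'),
    ← Complex.ofReal_log (exp_pos u).le, Real.log_exp, ← Complex.coe_smul, smul_smul,
    Complex.ofReal_exp, ← Complex.exp_add]
  ring_nf

theorem mellin_comp_div_right {E : Type*} [NormedAddCommGroup E] [NormedSpace ℂ E]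
    (f : ℝ → E) (s : ℂ) {a : ℝ} (ha : 0 < a) :
    mellin (fun t => f (t / a)) s = (a : ℂ) ^ s • mellin f s := by
  simp_rw [div_eq_mul_inv]
  rw [mellin_comp_mul_right f s (inv_pos.2 ha), Complex.ofReal_inv,
    Complex.inv_cpow_ofReal_nonneg ha.le, Complex.cpow_neg, inv_inv]

theorem mellin_cexp_neg_mul_add_inv (ν : ℂ) {z : ℝ} (hz : 0 < z) :
    mellin (fun t : ℝ => cexp (-(z / 2 * (t + t⁻¹)) : ℝ)) ν = 2 * besselK ν z := by
  rw [mellin_eq_integral_cexp_mul_smul_comp_exp, ← integral_cexp_mul_sub_mul_cosh ν hz]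
  refine integral_congr_ae (ae_of_all _ fun u => ?_)
  dsimp only
  rw [smul_eq_mul, ← Complex.exp_add, ← exp_neg, cosh_eq]
  push_cast
  ring_nf

noncomputable def jacquetKernel (s : ℂ) (y t x : ℝ) : ℂ :=
  (t : ℂ) ^ (s - 1) * cexp (-(t * (x ^ 2 + y ^ 2)) : ℝ) *
    cexp (-(2 * (π : ℂ) * Complex.I * (x : ℂ)))

theorem ofReal_div_cpow_mul_cexp_eq_integral_jacquetKernel {s : ℂ} (hs : 0 < s.re) {y : ℝ}
    (hy : 0 < y) (x : ℝ) :
    ((y / (x ^ 2 + y ^ 2) : ℝ) : ℂ) ^ s * cexp (-(2 * (π : ℂ) * Complex.I * (x : ℂ))) =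
      (y : ℂ) ^ s / Complex.Gamma s * ∫ t in Ioi 0, jacquetKernel s y t x := by
  have hr : 0 < x ^ 2 + y ^ 2 := by positivity
  have hΓ : Complex.Gamma s ≠ 0 := Complex.Gamma_ne_zero_of_re_pos hs
  have hgamma := Complex.integral_cpow_mul_exp_neg_mul_Ioi hs hr
  simp only [jacquetKernel]
  have hexp : ∀ t : ℝ, (-(t * (x ^ 2 + y ^ 2)) : ℝ) = -(((x ^ 2 + y ^ 2 : ℝ) : ℂ) * t) := by
    intro t; push_cast; ring
  simp_rw [hexp]
  have hsplit : ((y / (x ^ 2 + y ^ 2) : ℝ) : ℂ) ^ s =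
      (y : ℂ) ^ s * (1 / ((x ^ 2 + y ^ 2 : ℝ) : ℂ)) ^ s := by
    rw [div_eq_mul_one_div y, Complex.ofReal_mul,
      Complex.mul_cpow_ofReal_nonneg hy.le (by positivity)]
    push_cast; rfl
  rw [integral_mul_const, hgamma, hsplit]
  field_simp

theorem integral_jacquetKernel (s : ℂ) (y : ℝ) {t : ℝ} (ht : 0 < t) :
    ∫ x, jacquetKernel s y t x =
      (π : ℂ) ^ (1 / 2 : ℂ) *
        ((t : ℂ) ^ (s - 1 / 2 - 1) * cexp (-(y ^ 2 * t + π ^ 2 / t) : ℝ)) := by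
  have ht' : (t : ℂ) ≠ 0 := by exact_mod_cast ht.ne'
  have hsplit : ∀ x : ℝ, jacquetKernel s y t x =
      ((t : ℂ) ^ (s - 1) * cexp (-(t * y ^ 2) : ℝ)) *
        (cexp (Complex.I * (-2 * π : ℂ) * x) * cexp (-(t : ℂ) * x ^ 2)) := by
    intro x
    simp only [jacquetKernel, mul_assoc, ← Complex.exp_add]
    congr 2
    push_cast; ring
  have hpow : (t : ℂ) ^ (s - 1) * ((π : ℂ) / t) ^ (1 / 2 : ℂ) =
      (π : ℂ) ^ (1 / 2 : ℂ) * (t : ℂ) ^ (s - 1 / 2 - 1) := by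
    rw [Complex.div_cpow_ofReal_nonneg pi_pos.le ht.le, sub_right_comm,
      Complex.cpow_sub (s - 1) (1 / 2) ht']
    ring
  simp_rw [hsplit]
  rw [integral_const_mul, fourierIntegral_gaussian (by simpa using ht), mul_mul_mul_comm, hpow,
    mul_assoc, ← Complex.exp_add]
  congr 3
  push_cast
  field_simp
  ring

theorem measurable_jacquetKernel (s : ℂ) (y : ℝ) :
    Measurable (Function.uncurry (jacquetKernel s y)) := by
  unfold jacquetKernel Function.uncurry
  fun_prop

theorem norm_jacquetKernel (s : ℂ) (y : ℝ) {t : ℝ} (ht : 0 < t) (x : ℝ) :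
    ‖jacquetKernel s y t x‖ = t ^ (s.re - 1) * rexp (-(t * y ^ 2)) * rexp (-t * x ^ 2) := by
  have hphase : ‖cexp (-(2 * (π : ℂ) * Complex.I * (x : ℂ)))‖ = 1 := by
    rw [Complex.norm_exp]; simp
  rw [jacquetKernel, norm_mul, norm_mul, Complex.norm_cpow_eq_rpow_re_of_pos ht,
    Complex.norm_exp_ofReal, hphase, mul_one, Complex.sub_re, Complex.one_re, mul_assoc,
    ← Real.exp_add]
  ring_nf

theorem integrable_jacquetKernel {s : ℂ} (hs : 1 / 2 < s.re) {y : ℝ} (hy : 0 < y) :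
    Integrable (Function.uncurry (jacquetKernel s y)) ((volume.restrict (Ioi 0)).prod volume) := by
  refine (integrable_prod_iff (measurable_jacquetKernel s y).aestronglyMeasurable).2 ⟨?_, ?_⟩
  · filter_upwards [ae_restrict_mem measurableSet_Ioi] with t (ht : 0 < t)
    refine ((integrable_exp_neg_mul_sq ht).const_mul _).mono'
      (measurable_jacquetKernel s y).of_uncurry_left.aestronglyMeasurable
      (ae_of_all _ fun x => (norm_jacquetKernel s y ht x).le)
  · have hint : IntegrableOn
        (fun t : ℝ => t ^ (s.re - 1 / 2 - 1) * rexp (-y ^ 2 * t ^ (1 : ℝ))) (Ioi 0) :=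
      integrableOn_rpow_mul_exp_neg_mul_rpow (by linarith) one_pos (by positivity)
    refine IntegrableOn.congr_fun (hint.const_mul √π) (fun t (ht : 0 < t) => ?_)
      measurableSet_Ioi
    simp only [Function.uncurry_apply_pair, norm_jacquetKernel s y ht, integral_const_mul,
      integral_gaussian]
    rw [rpow_one, sqrt_div' π ht.le, sqrt_eq_rpow t, sub_right_comm, rpow_sub ht (s.re - 1)]
    ring_nf

theorem integral_integral_jacquetKernel (s : ℂ) {y : ℝ} (hy : 0 < y) :
    ∫ t in Ioi 0, ∫ x, jacquetKernel s y t x =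
      (π : ℂ) ^ (1 / 2 : ℂ) * (((π / y : ℝ) : ℂ) ^ (s - 1 / 2) *
        (2 * besselK (s - 1 / 2) (2 * π * y))) := by
  have hc : 0 < π / y := div_pos pi_pos hy
  have hinner : ∀ t ∈ Ioi (0 : ℝ), ∫ x, jacquetKernel s y t x = (π : ℂ) ^ (1 / 2 : ℂ) *
      ((t : ℂ) ^ (s - 1 / 2 - 1) •
        cexp (-(2 * π * y / 2 * (t / (π / y) + (t / (π / y))⁻¹)) : ℝ)) := by
    intro t (ht : 0 < t)
    rw [integral_jacquetKernel s y ht, smul_eq_mul]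
    congr 5
    field_simp
  rw [setIntegral_congr_fun measurableSet_Ioi hinner, integral_const_mul, ← mellin,
    mellin_comp_div_right (fun t : ℝ => cexp (-(2 * π * y / 2 * (t + t⁻¹)) : ℝ)) _ hc,
    mellin_cexp_neg_mul_add_inv _ (by positivity), smul_eq_mul]

/-- For `Re ν > 0` and `y > 0`,
`∫_ℝ (y/(x²+y²))^{1/2+ν} e^{−2πix} dx = 2 π^{ν+1/2} √y K_ν(2πy) / Γ(ν+1/2)`. -/
theorem jacquet_integral_sl2 (ν : ℂ) (hν : 0 < ν.re) (y : ℝ) (hy : 0 < y) :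
    (∫ x : ℝ, ((y / (x ^ 2 + y ^ 2) : ℝ) : ℂ) ^ ((1 / 2 : ℂ) + ν) *
        Complex.exp (-(2 * (π : ℂ) * Complex.I * (x : ℂ))))
      = 2 * (π : ℂ) ^ (ν + 1 / 2) * (Real.sqrt y : ℂ) * besselK ν (2 * π * y) /
          Complex.Gamma (ν + 1 / 2) := by
  set s : ℂ := 1 / 2 + ν with hs_def
  have hs : 1 / 2 < s.re := by simpa [s] using hν
  have hyν : (y : ℂ) ^ ν ≠ 0 := by simp [Complex.cpow_eq_zero_iff, hy.ne']
  calc _ = ∫ x, (y : ℂ) ^ s / Complex.Gamma s * ∫ t in Ioi 0, jacquetKernel s y t x :=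
        integral_congr_ae (ae_of_all _
          (ofReal_div_cpow_mul_cexp_eq_integral_jacquetKernel (by linarith) hy))
    _ = (y : ℂ) ^ s / Complex.Gamma s *
          ((π : ℂ) ^ (1 / 2 : ℂ) * (((π / y : ℝ) : ℂ) ^ ν * (2 * besselK ν (2 * π * y)))) := by
        rw [integral_const_mul, ← integral_integral_swap (integrable_jacquetKernel hs hy),
          integral_integral_jacquetKernel s hy, hs_def, add_sub_cancel_left]
    _ = _ := by
        rw [add_comm ν, ← hs_def, Complex.ofReal_div,
          Complex.div_cpow_ofReal_nonneg pi_pos.le hy.le,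
          Complex.cpow_add _ _ (by exact_mod_cast hy.ne'),
          Complex.cpow_add _ _ (by exact_mod_cast pi_ne_zero), sqrt_eq_rpow,
          Complex.ofReal_cpow hy.le]
        push_cast
        field_simp
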